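/- Let z ∈ K. Then ∑_{i=0}^{n−1} z^(e_i) = 0, where e_i = ∑_{j=0}^{i−1} σ^j, holds if and only if there exists a nonzero y ∈ K such that z = y^(σ−1) and Tr(y) = 0. -/

import Mathlib

/-!
Write `σ = q ^ s` and `eᵢ = 1 + σ + ⋯ + σ ^ (i - 1)`. If `z * y = y ^ σ` then `y ^ σ ^ i = z ^ eᵢ * y`,
so `(∑ᵢ z ^ eᵢ) * y = ∑ᵢ y ^ σ ^ i`, and since `s` is coprime to `n` the maps `x ↦ x ^ σ ^ i`
(`i < n`) are the maps `x ↦ x ^ q ^ j` (`j < n`) in another order, so the right-hand side is `Tr y`. This gives the backward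
direction at once. Conversely, raising `∑ᵢ z ^ eᵢ = 0` to the additive power `σ` gives the norm
condition `z ^ eₙ = 1`, and then Hilbert 90 for the generator `x ↦ x ^ σ` of `Gal(K/𝔽_q)` provides
`y ≠ 0` with `y ^ σ = z * y`: take `y = ∑ᵢ z⁻¹ ^ eᵢ * x ^ σ ^ i` for an `x` making it nonzero, which
exists because the `x ↦ x ^ σ ^ i` are linearly independent (a polynomial of degree `< q ^ n`).
-/

open Finset

theorem Nat.Coprime.sum_range_mul_mod {M : Type*} [AddCommMonoid M] {s n : ℕ}
    (h : s.Coprime n) (f : ℕ → M) :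
    ∑ i ∈ range n, f (s * i % n) = ∑ i ∈ range n, f i := by
  have hmaps : Set.MapsTo (fun i ↦ s * i % n) (range n : Set ℕ) (range n : Set ℕ) :=
    fun i hi ↦ mem_range.2 (Nat.mod_lt _ (pos_of_ne_zero (by rintro rfl; simp at hi)))
  have hinj : Set.InjOn (fun i ↦ s * i % n) (range n : Set ℕ) := fun i hi j hj hij ↦
    (Nat.ModEq.cancel_left_of_coprime (Nat.coprime_comm.1 h) hij).eq_of_lt_of_lt
      (mem_range.1 hi) (mem_range.1 hj)
  exact sum_nbij _ hmaps hinj (surjOn_of_injOn_of_card_le _ hmaps hinj le_rfl) fun _ _ ↦ rfl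

theorem pow_pow_eq_pow_geom_sum_mul {M : Type*} [CommMonoid M] {σ : ℕ} {y z : M}
    (h : z * y = y ^ σ) (i : ℕ) : y ^ σ ^ i = z ^ (∑ j ∈ range i, σ ^ j) * y := by
  induction i with
  | zero => simp
  | succ i ih =>
    rw [pow_succ, pow_mul, ih, mul_pow, ← h, ← pow_mul, geom_sum_succ, pow_add, pow_one,
      mul_comm (∑ j ∈ range i, σ ^ j), mul_assoc]

theorem sum_pow_geom_sum_mul {R : Type*} [CommSemiring R] {σ : ℕ} {y z : R}
    (h : z * y = y ^ σ) (n : ℕ) :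
    (∑ i ∈ range n, z ^ ∑ j ∈ range i, σ ^ j) * y = ∑ i ∈ range n, y ^ σ ^ i := by
  simp only [sum_mul, pow_pow_eq_pow_geom_sum_mul h]

section ExpChar

variable {R : Type*} [CommSemiring R] (p k : ℕ) [ExpChar R p]

theorem add_mul_sum_pow_expChar_pow (n : ℕ) (w x : R) :
    x + w * (∑ i ∈ range n, w ^ (∑ j ∈ range i, (p ^ k) ^ j) * x ^ (p ^ k) ^ i) ^ p ^ k =
      ∑ i ∈ range n, w ^ (∑ j ∈ range i, (p ^ k) ^ j) * x ^ (p ^ k) ^ i +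
        w ^ (∑ j ∈ range n, (p ^ k) ^ j) * x ^ (p ^ k) ^ n := by
  rw [← sum_range_succ, sum_range_succ', sum_pow_char_pow, mul_sum, add_comm]
  congr 1
  · refine sum_congr rfl fun i _ ↦ ?_
    rw [geom_sum_succ, pow_succ]
    ring
  · simp

theorem pow_geom_sum_eq_one_of_sum_eq_zero {z : R} {n : ℕ}
    (h : ∑ i ∈ range n, z ^ ∑ j ∈ range i, (p ^ k) ^ j = 0) :
    z ^ ∑ j ∈ range n, (p ^ k) ^ j = 1 := by
  simpa [h, zero_pow (expChar_pow_pos R p k).ne'] using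
    (add_mul_sum_pow_expChar_pow p k n z (1 : R)).symm

end ExpChar

open Polynomial in
theorem exists_sum_mul_pow_ne_zero {K ι : Type*} [Field K] [Fintype K] {t : Finset ι}
    {c : ι → K} {d : ι → ℕ} {i₀ : ι} (hi₀ : i₀ ∈ t) (hc : c i₀ ≠ 0)
    (hd : ∀ i ∈ t, d i < Fintype.card K) (hinj : ∀ i ∈ t, d i = d i₀ → i = i₀) :
    ∃ x : K, ∑ i ∈ t, c i * x ^ d i ≠ 0 := by
  classical
  set P : K[X] := ∑ i ∈ t, C (c i) * X ^ d i
  have hcoeff : P.coeff (d i₀) = c i₀ := by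
    rw [finsetSum_coeff, sum_eq_single_of_mem i₀ hi₀]
    · simp
    · intro i hi hne
      rw [coeff_C_mul_X_pow, if_neg fun h ↦ hne (hinj i hi h.symm)]
  have hdeg : P.natDegree < Fintype.card K := by
    refine (natDegree_sum_le_of_forall_le _ _ fun i hi ↦ ?_).trans_lt
      (Nat.sub_one_lt Fintype.card_ne_zero)
    exact (natDegree_C_mul_X_pow_le _ _).trans (Nat.le_sub_one_of_lt (hd i hi))
  by_contra! h
  refine hc (hcoeff ▸ ?_)
  rw [eq_zero_of_natDegree_lt_card_of_eval_eq_zero P Function.injective_id _ hdeg, coeff_zero]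
  intro x
  simpa [P, eval_finsetSum] using h x

namespace FiniteField

variable {K : Type*} [Field K] [Fintype K] {q n : ℕ}

theorem ne_zero_of_card_eq_pow (hK : Fintype.card K = q ^ n) : n ≠ 0 := by
  rintro rfl
  exact (Fintype.one_lt_card (α := K)).ne' (by simpa using hK)

theorem one_lt_of_card_eq_pow (hK : Fintype.card K = q ^ n) : 1 < q :=
  (Nat.one_lt_pow_iff (ne_zero_of_card_eq_pow hK)).1 (hK ▸ Fintype.one_lt_card)

theorem exists_ringExpChar_pow_eq (hK : Fintype.card K = q ^ n) :
    ∃ m, q = ringExpChar K ^ m := by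
  obtain ⟨p, _, k, hp, hcard⟩ := FiniteField.card' K
  have : ExpChar K p := .prime hp
  have hdvd : q ∣ p ^ (k : ℕ) := hcard ▸ hK ▸ dvd_pow_self q (ne_zero_of_card_eq_pow hK)
  obtain ⟨m, -, rfl⟩ := (Nat.dvd_prime_pow hp).1 hdvd
  exact ⟨m, by rw [ringExpChar.eq K p]⟩

theorem pow_pow_eq_pow_pow_mod (hK : Fintype.card K = q ^ n) (x : K) (m : ℕ) :
    x ^ q ^ m = x ^ q ^ (m % n) := by
  conv_lhs => rw [← Nat.mod_add_div m n, pow_add, pow_mul, pow_mul, ← hK, pow_card_pow]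

variable {s : ℕ}

theorem sum_pow_pow_pow_eq_sum_pow_pow (hK : Fintype.card K = q ^ n) (hsn : s.Coprime n)
    (y : K) : ∑ i ∈ range n, y ^ (q ^ s) ^ i = ∑ i ∈ range n, y ^ q ^ i :=
  calc _ = ∑ i ∈ range n, y ^ q ^ (s * i % n) :=
        sum_congr rfl fun i _ ↦ by rw [← pow_mul, pow_pow_eq_pow_pow_mod hK]
    _ = _ := hsn.sum_range_mul_mod fun j ↦ y ^ q ^ j

theorem exists_sum_mul_pow_pow_pow_ne_zero (hK : Fintype.card K = q ^ n) (hsn : s.Coprime n)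
    {c : ℕ → K} (hc : c 0 ≠ 0) : ∃ x : K, ∑ i ∈ range n, c i * x ^ (q ^ s) ^ i ≠ 0 := by
  have hn := Nat.pos_of_ne_zero (ne_zero_of_card_eq_pow hK)
  have hq := one_lt_of_card_eq_pow hK
  have hinj (i : ℕ) (hi : i ∈ range n) (h : q ^ (s * i % n) = q ^ (s * 0 % n)) : i = 0 := by
    have hmod : s * i % n = 0 := by simpa using Nat.pow_right_injective hq h
    exact Nat.eq_zero_of_dvd_of_lt (hsn.symm.dvd_of_dvd_mul_left (Nat.dvd_of_mod_eq_zero hmod))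
      (mem_range.1 hi)
  obtain ⟨x, hx⟩ := exists_sum_mul_pow_ne_zero (d := fun i ↦ q ^ (s * i % n))
    (mem_range.2 hn) hc (fun i _ ↦ hK ▸ Nat.pow_lt_pow_right hq (Nat.mod_lt _ hn)) hinj
  refine ⟨x, ?_⟩
  convert hx using 3 with i
  rw [← pow_mul, pow_pow_eq_pow_pow_mod hK]

theorem exists_ne_zero_pow_eq_mul_of_pow_geom_sum_eq_one (hK : Fintype.card K = q ^ n)
    (hsn : s.Coprime n) {z : K} (hz : z ^ ∑ j ∈ range n, (q ^ s) ^ j = 1) :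
    ∃ y : K, y ≠ 0 ∧ y ^ q ^ s = z * y := by
  have hq := one_lt_of_card_eq_pow hK
  have hz0 : z ≠ 0 := by
    refine ne_zero_pow (sum_pos (fun j _ ↦ ?_) ?_).ne' (hz ▸ one_ne_zero)
    · exact pow_pos (pow_pos (zero_lt_one.trans hq) s) j
    · exact nonempty_range_iff.2 (ne_zero_of_card_eq_pow hK)
  obtain ⟨x, hx⟩ := exists_sum_mul_pow_pow_pow_ne_zero hK hsn
    (c := fun i ↦ z⁻¹ ^ ∑ j ∈ range i, (q ^ s) ^ j) (by simp)
  obtain ⟨m, hm⟩ := exists_ringExpChar_pow_eq hK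
  -- with `y` the sum in `hx`, `key` is `x + z⁻¹ * y ^ σ = y + z⁻¹ ^ eₙ * x ^ σ ^ n`
  have key := add_mul_sum_pow_expChar_pow (ringExpChar K) (m * s) n z⁻¹ x
  have hxn : x ^ (q ^ s) ^ n = x := by
    rw [← pow_mul, mul_comm, pow_mul, ← hK, pow_card_pow]
  rw [pow_mul, ← hm, inv_pow, hz, inv_one, one_mul, hxn, add_comm x, add_left_inj,
    inv_mul_eq_iff_eq_mul₀ hz0] at key
  exact ⟨_, hx, key⟩

end FiniteField

open FiniteField

theorem stmt_3_general (q n s : ℕ) (hsn : Nat.Coprime s n) (K : Type*) [Field K] [Fintype K]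
    (hK : Fintype.card K = q ^ n) (z : K) :
    (∑ i ∈ Finset.range n, z ^ (∑ j ∈ Finset.range i, (q ^ s) ^ j)) = 0 ↔
    ∃ y : K, y ≠ 0 ∧ z = y ^ (q ^ s - 1) ∧ ∑ i ∈ Finset.range n, y ^ (q ^ i) = 0 := by
  have hσ : q ^ s ≠ 0 := pow_ne_zero s (zero_lt_one.trans (one_lt_of_card_eq_pow hK)).ne'
  have sum_mul_eq_trace {y : K} (hy : z * y = y ^ q ^ s) :
      (∑ i ∈ range n, z ^ ∑ j ∈ range i, (q ^ s) ^ j) * y = ∑ i ∈ range n, y ^ q ^ i := by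
    rw [sum_pow_geom_sum_mul hy, sum_pow_pow_pow_eq_sum_pow_pow hK hsn]
  constructor
  · intro hS
    obtain ⟨m, hm⟩ := exists_ringExpChar_pow_eq hK
    have hσm : q ^ s = ringExpChar K ^ (m * s) := by rw [hm, pow_mul]
    have hN := pow_geom_sum_eq_one_of_sum_eq_zero (ringExpChar K) (m * s) (hσm ▸ hS)
    obtain ⟨y, hy0, hy⟩ := exists_ne_zero_pow_eq_mul_of_pow_geom_sum_eq_one hK hsn (hσm ▸ hN)
    refine ⟨y, hy0, mul_right_cancel₀ hy0 ?_, ?_⟩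
    · rw [pow_sub_one_mul hσ, hy]
    · rw [← sum_mul_eq_trace hy.symm, hS, zero_mul]
  · rintro ⟨y, hy0, rfl, htr⟩
    exact (mul_eq_zero.1 ((sum_mul_eq_trace (pow_sub_one_mul hσ y)).trans htr)).resolve_right hy0

/-- `∑_{i=0}^{n-1} z^{e_i} = 0` iff `z = y^(σ-1)` for some nonzero `y` with
`Tr(y) = 0`. -/
theorem stmt_3 (q n s : ℕ) (hq : IsPrimePow q) (hn : 3 ≤ n) (hs : 0 < s)
    (hsn : Nat.Coprime s n) (K : Type*) [Field K] [Fintype K]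
    (hK : Fintype.card K = q ^ n) (z : K) :
    (∑ i ∈ Finset.range n, z ^ (∑ j ∈ Finset.range i, (q ^ s) ^ j)) = 0 ↔
    ∃ y : K, y ≠ 0 ∧ z = y ^ (q ^ s - 1) ∧ ∑ i ∈ Finset.range n, y ^ (q ^ i) = 0 :=
  stmt_3_general q n s hsn K hK z
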